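/- Let f = f_{L+1} ∘ ⋯ ∘ f₁ where each fₗ(x) = σ(Wₗx + bₗ) with σ the ReLU activation σ(t) = max(t,0), and let g be the same network with weights (Vₗ, cₗ). If all weight matrices and biases have entries bounded by B ≥ 1 and all layer widths are at most K, then ‖f − g‖_∞ over [0,1]^P is at most (L+1)·(B(K+1))^{L+1} · max_ℓ (‖Wₗ − Vₗ‖_∞ + ‖bₗ − cₗ‖_∞), where ‖·‖_∞ on matrices denotes max absolute entry. -/
import Mathlib


/-- Forward pass of a fully-connected ReLU network: `reluNet d W b l x` is the output of
the first `l` layers `x ↦ σ(Wₗ x + bₗ)` applied to the input `x`, with ReLU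
`σ(t) = max(t, 0)` applied coordinatewise at every layer. -/
def reluNet (d : ℕ → ℕ) (W : ∀ l : ℕ, Matrix (Fin (d (l + 1))) (Fin (d l)) ℝ)
    (b : ∀ l : ℕ, Fin (d (l + 1)) → ℝ) : (l : ℕ) → (Fin (d 0) → ℝ) → Fin (d l) → ℝ
  | 0 => fun x => x
  | l + 1 => fun x i => max ((∑ j, W l i j * reluNet d W b l x j) + b l i) 0

/-- Lipschitz-in-parameters bound for deep ReLU networks: if two networks
`f = f_{L+1} ∘ ⋯ ∘ f₁` and `g` (same architecture, weights `(Wₗ,bₗ)` resp. `(Vₗ,cₗ)`)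
have all parameters bounded by `B ≥ 1`, all layer widths at most `K`, input dimension
`P`, and all parameters within `δ` of each other, then on `[0,1]^P` the outputs differ
by at most `(L+1)·(B(K+1))^{L+1}·δ`. -/
theorem stmt9 (L K P : ℕ) (B δ : ℝ) (hB : 1 ≤ B) (hδ : 0 ≤ δ)
    (d : ℕ → ℕ) (hd0 : d 0 = P) (hdK : ∀ l, l ≤ L + 1 → d l ≤ K)
    (W V : ∀ l : ℕ, Matrix (Fin (d (l + 1))) (Fin (d l)) ℝ)
    (b c : ∀ l : ℕ, Fin (d (l + 1)) → ℝ)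
    (hWB : ∀ l, l < L + 1 → ∀ i j, |W l i j| ≤ B)
    (hbB : ∀ l, l < L + 1 → ∀ i, |b l i| ≤ B)
    (hVB : ∀ l, l < L + 1 → ∀ i j, |V l i j| ≤ B)
    (hcB : ∀ l, l < L + 1 → ∀ i, |c l i| ≤ B)
    (hWδ : ∀ l, l < L + 1 → ∀ i j, |W l i j - V l i j| ≤ δ)
    (hbδ : ∀ l, l < L + 1 → ∀ i, |b l i - c l i| ≤ δ) :
    ∀ x : Fin (d 0) → ℝ, (∀ p, x p ∈ Set.Icc (0:ℝ) 1) →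
      ∀ i : Fin (d (L + 1)),
        |reluNet d W b (L + 1) x i - reluNet d V c (L + 1) x i|
          ≤ (L + 1) * (B * (K + 1)) ^ (L + 1) * δ := by
  intro x hx
  have hK : (0:ℝ) ≤ K := Nat.cast_nonneg K
  set A := B * (K + 1) with hA
  have hA1 : (1:ℝ) ≤ A := by nlinarith
  have hB0 : (0:ℝ) ≤ B := by linarith
  have hApow : ∀ l : ℕ, (1:ℝ) ≤ A ^ l := fun l => one_le_pow₀ hA1
  -- magnitude bound for the (V, c) network
  have mag : ∀ l, l ≤ L + 1 → ∀ i, |reluNet d V c l x i| ≤ A ^ l := by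
    intro l
    induction l with
    | zero =>
      intro _ i
      simp only [reluNet, pow_zero]
      exact abs_le.mpr ⟨by linarith [(hx i).1], (hx i).2⟩
    | succ l ih =>
      intro hl i
      have hl' : l ≤ L + 1 := Nat.le_of_succ_le hl
      have hlt : l < L + 1 := hl
      have hdl : (d l : ℝ) ≤ K := by exact_mod_cast hdK l hl'
      simp only [reluNet]
      have hsum : |∑ j, V l i j * reluNet d V c l x j| ≤ (d l : ℝ) * (B * A ^ l) := by
        calc |∑ j, V l i j * reluNet d V c l x j|
            ≤ ∑ j, |V l i j * reluNet d V c l x j| := Finset.abs_sum_le_sum_abs _ _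
          _ ≤ ∑ _j : Fin (d l), B * A ^ l := by
              refine Finset.sum_le_sum fun j _ => ?_
              rw [abs_mul]
              exact mul_le_mul (hVB l hlt i j) (ih hl' j) (abs_nonneg _) hB0
          _ = (d l : ℝ) * (B * A ^ l) := by
              simp [Finset.sum_const, Finset.card_univ]
      have h1 : |max ((∑ j, V l i j * reluNet d V c l x j) + c l i) 0|
          ≤ |(∑ j, V l i j * reluNet d V c l x j) + c l i| := by
        rw [abs_of_nonneg (le_max_right _ _)]
        exact max_le (le_abs_self _) (abs_nonneg _)
      have h2 : |(∑ j, V l i j * reluNet d V c l x j) + c l i|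
          ≤ (d l : ℝ) * (B * A ^ l) + B :=
        (abs_add_le _ _).trans (add_le_add hsum (hcB l hlt i))
      have hAl := hApow l
      calc |max ((∑ j, V l i j * reluNet d V c l x j) + c l i) 0|
          ≤ (d l : ℝ) * (B * A ^ l) + B := h1.trans h2
        _ ≤ A ^ (l + 1) := by
            rw [pow_succ]
            have hb1 : B ≤ B * A ^ l := by nlinarith
            have hb2 : (d l : ℝ) * (B * A ^ l) ≤ K * (B * A ^ l) := by nlinarith
            nlinarith
  -- difference bound
  have diff : ∀ l, l ≤ L + 1 → ∀ i,
      |reluNet d W b l x i - reluNet d V c l x i| ≤ l * A ^ l * δ := by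
    intro l
    induction l with
    | zero => intro _ i; simp [reluNet]
    | succ l ih =>
      intro hl i
      have hl' : l ≤ L + 1 := Nat.le_of_succ_le hl
      have hlt : l < L + 1 := hl
      have hdl : (d l : ℝ) ≤ K := by exact_mod_cast hdK l hl'
      have hAl := hApow l
      have hAl0 : (0:ℝ) ≤ A ^ l := by linarith
      simp only [reluNet]
      have hmax : |max ((∑ j, W l i j * reluNet d W b l x j) + b l i) 0 -
          max ((∑ j, V l i j * reluNet d V c l x j) + c l i) 0|
          ≤ |((∑ j, W l i j * reluNet d W b l x j) + b l i) -
             ((∑ j, V l i j * reluNet d V c l x j) + c l i)| :=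
        abs_max_sub_max_le_abs _ _ _
      have hsum : |(∑ j, W l i j * reluNet d W b l x j) -
          (∑ j, V l i j * reluNet d V c l x j)|
          ≤ (d l : ℝ) * (B * (l * A ^ l * δ) + δ * A ^ l) := by
        rw [← Finset.sum_sub_distrib]
        calc |∑ j, (W l i j * reluNet d W b l x j - V l i j * reluNet d V c l x j)|
            ≤ ∑ j, |W l i j * reluNet d W b l x j - V l i j * reluNet d V c l x j| :=
              Finset.abs_sum_le_sum_abs _ _
          _ ≤ ∑ _j : Fin (d l), (B * (l * A ^ l * δ) + δ * A ^ l) := by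
              refine Finset.sum_le_sum fun j _ => ?_
              have key : W l i j * reluNet d W b l x j - V l i j * reluNet d V c l x j
                  = W l i j * (reluNet d W b l x j - reluNet d V c l x j)
                    + (W l i j - V l i j) * reluNet d V c l x j := by ring
              rw [key]
              refine (abs_add_le _ _).trans (add_le_add ?_ ?_)
              · rw [abs_mul]
                exact mul_le_mul (hWB l hlt i j) (ih hl' j) (abs_nonneg _) hB0
              · rw [abs_mul]
                exact mul_le_mul (hWδ l hlt i j) (mag l hl' j) (abs_nonneg _) hδ
          _ = (d l : ℝ) * (B * (l * A ^ l * δ) + δ * A ^ l) := by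
              simp [Finset.sum_const, Finset.card_univ, mul_add]
      have habs : |((∑ j, W l i j * reluNet d W b l x j) + b l i) -
          ((∑ j, V l i j * reluNet d V c l x j) + c l i)|
          ≤ (d l : ℝ) * (B * (l * A ^ l * δ) + δ * A ^ l) + δ := by
        have : ((∑ j, W l i j * reluNet d W b l x j) + b l i) -
            ((∑ j, V l i j * reluNet d V c l x j) + c l i)
            = ((∑ j, W l i j * reluNet d W b l x j) -
               (∑ j, V l i j * reluNet d V c l x j)) + (b l i - c l i) := by ring
        rw [this]
        exact (abs_add_le _ _).trans (add_le_add hsum (hbδ l hlt i))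
      have hstep : (d l : ℝ) * (B * (l * A ^ l * δ) + δ * A ^ l) + δ
          ≤ (l + 1 : ℕ) * A ^ (l + 1) * δ := by
        push_cast
        rw [pow_succ]
        have hposX : (0:ℝ) ≤ B * (↑l * A ^ l * δ) := by positivity
        have hposY : (0:ℝ) ≤ δ * A ^ l := by positivity
        have t1 : (d l : ℝ) * (B * (↑l * A ^ l * δ)) ≤ ↑K * (B * (↑l * A ^ l * δ)) :=
          mul_le_mul_of_nonneg_right hdl hposX
        have t2 : (d l : ℝ) * (δ * A ^ l) ≤ ↑K * (δ * A ^ l) :=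
          mul_le_mul_of_nonneg_right hdl hposY
        have t3 : δ ≤ B * A ^ l * δ := by
          have h1 : (1:ℝ) ≤ B * A ^ l := by nlinarith
          nlinarith [mul_le_mul_of_nonneg_right h1 hδ]
        have h5 : (K:ℝ) * (δ * A ^ l) ≤ ↑K * (B * (δ * A ^ l)) :=
          mul_le_mul_of_nonneg_left (le_mul_of_one_le_left (mul_nonneg hδ hAl0) hB) hK
        have h6 : (0:ℝ) ≤ ↑l * (B * (A ^ l * δ)) := by positivity
        have e : (↑l + 1) * (A ^ l * A) * δ
            = ↑K * (B * (↑l * A ^ l * δ)) + ↑l * (B * (A ^ l * δ))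
              + ↑K * (B * (δ * A ^ l)) + B * A ^ l * δ := by
          rw [hA]; ring
        have lhs_eq : (d l : ℝ) * (B * (↑l * A ^ l * δ) + δ * A ^ l)
            = (d l : ℝ) * (B * (↑l * A ^ l * δ)) + (d l : ℝ) * (δ * A ^ l) :=
          mul_add _ _ _
        linarith
      exact hmax.trans (habs.trans hstep)
  intro i
  have := diff (L + 1) le_rfl i
  push_cast at this ⊢
  exact this
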